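/- Let D be the improved digraph whose associated undirected graph F is a forest with exactly one nontrivial component, a negative tree T, and assume c is nearly conservative on D. Let d' be the distance function of D' = D − A(T) (with d'(x,y) = +∞ when y is unreachable from x in D'). Then for all vertices s ≠ t, the minimum weight d(s,t) of a directed path from s to t in D satisfies d(s,t) = min( d'(s,t), min over u,v ∈ V(T) of [ d'(s,u) + d^T(u,v) + d'(v,t) ] ). -/

import Mathlib

namespace NearlyConservativePaper

variable {V : Type} [Fintype V] [DecidableEq V]

/-- A weighted digraph given by adjacency and arc weights. -/
structure WDigraph (V : Type) where
  Adj : V → V → Prop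
  c : V → V → ℝ

/-- A step `(u, v, b)` of a walk: `b = false` means an original arc from `u` to `v`,
`b = true` means the added loose arc from `u` to `v`. -/
abbrev Step (V : Type) := V × V × Bool

/-- `IsWalk AS s t l`: `l` is a walk from `s` to `t` using arcs allowed by `AS`. -/
def IsWalk (AS : V → V → Bool → Prop) : V → V → List (Step V) → Prop
  | s, t, [] => s = t
  | s, t, (u, v, b) :: l => u = s ∧ AS u v b ∧ IsWalk AS v t l

/-- The list of head-vertices of the steps of a walk. -/
def heads (l : List (Step V)) : List V := l.map fun a => a.2.1

/-- Total weight of a walk with respect to the step-weight `w`. -/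
def wSum (w : V → V → Bool → ℝ) (l : List (Step V)) : ℝ :=
  (l.map fun a => w a.1 a.2.1 a.2.2).sum

/-- A directed cycle: a nonempty closed walk whose vertices are pairwise distinct. -/
def IsCycle (AS : V → V → Bool → Prop) (s : V) (l : List (Step V)) : Prop :=
  IsWalk AS s s l ∧ l ≠ [] ∧ (heads l).Nodup

/-- A directed (simple) path. -/
def IsPath (AS : V → V → Bool → Prop) (s t : V) (l : List (Step V)) : Prop :=
  IsWalk AS s t l ∧ (s :: heads l).Nodup

/-- Nearly conservative: every negative directed cycle consists of exactly two arcs. -/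
def NearlyCons (AS : V → V → Bool → Prop) (w : V → V → Bool → ℝ) : Prop :=
  ∀ s l, IsCycle AS s l → wSum w l < 0 → l.length = 2

/-- Minimum weight of a directed path from `s` to `t`, `+∞` if there is none. -/
noncomputable def distW (AS : V → V → Bool → Prop) (w : V → V → Bool → ℝ)
    (s t : V) : EReal :=
  sInf {x : EReal | ∃ l, IsPath AS s t l ∧ (wSum w l : EReal) = x}

namespace WDigraph

variable (D : WDigraph V)

/-- The arc `uv` is special if `vu` is also an arc and `c(uv) + c(vu) < 0`. -/
def Special (u v : V) : Prop := D.Adj u v ∧ D.Adj v u ∧ D.c u v + D.c v u < 0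

/-- The arcs of the original digraph `D` (only `b = false` steps). -/
def baseArcs (u v : V) (b : Bool) : Prop := b = false ∧ D.Adj u v

/-- The arcs of the improved digraph: original arcs and, for every special arc `vu`,
an added loose ordinary arc from `u` to `v`. -/
def ImpArc (u v : V) (b : Bool) : Prop := if b then D.Special v u else D.Adj u v

/-- The weight of a step of the improved digraph: the loose arc added for the
special arc `vu` has weight `-c(vu)`. -/
def impW (u v : V) (b : Bool) : ℝ := if b then -(D.c v u) else D.c u v

/-- A walk is special-simple if it contains every special arc at most once and never
contains both a special arc and its opposite. -/
def SpecialSimple (l : List (Step V)) : Prop :=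
  ∀ u v, D.Special u v → l.count (u, v, false) + l.count (v, u, false) ≤ 1

/-- The associated undirected graph `F`. -/
def F : SimpleGraph V where
  Adj u v := u ≠ v ∧ D.Special u v
  symm := by
    constructor
    rintro u v ⟨hne, h1, h2, h3⟩
    exact ⟨hne.symm, h2, h1, by linarith⟩
  loopless := by constructor; rintro u ⟨hne, -⟩; exact hne rfl

/-- The weight of a walk of `F`, each edge being traversed as the special arc pointing
in the direction of the traversal. -/
def fWeight {s t : V} (p : D.F.Walk s t) : ℝ :=
  (p.darts.map fun d => D.c d.toProd.1 d.toProd.2).sum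

/-- The improved digraph with the original (special) arcs in `Rem` removed. -/
def arcsMinus (Rem : V → V → Prop) (u v : V) (b : Bool) : Prop :=
  D.ImpArc u v b ∧ ¬ (b = false ∧ Rem u v)

end WDigraph

/-- The special arcs of the negative tree containing `t₀` (to be removed from `D`). -/
def remT (D : WDigraph V) (t₀ : V) : V → V → Prop :=
  fun x y => D.F.Adj x y ∧ D.F.Reachable t₀ x

section Aux
set_option linter.unusedSectionVars false

variable {V : Type} [Fintype V] [DecidableEq V]
variable {AS AS' : V → V → Bool → Prop} {w : V → V → Bool → ℝ}

@[simp] lemma isWalk_nil {s t : V} : IsWalk AS s t ([] : List (Step V)) ↔ s = t := Iff.rfl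

@[simp] lemma isWalk_cons {s t x y : V} {b : Bool} {l : List (Step V)} :
    IsWalk AS s t ((x, y, b) :: l) ↔ x = s ∧ AS x y b ∧ IsWalk AS y t l := Iff.rfl

@[simp] lemma heads_nil : heads ([] : List (Step V)) = [] := rfl

@[simp] lemma heads_cons {a : Step V} {l : List (Step V)} :
    heads (a :: l) = a.2.1 :: heads l := rfl

@[simp] lemma heads_append {l₁ l₂ : List (Step V)} :
    heads (l₁ ++ l₂) = heads l₁ ++ heads l₂ := List.map_append

@[simp] lemma wSum_nil : wSum w ([] : List (Step V)) = 0 := rfl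

@[simp] lemma wSum_cons {a : Step V} {l : List (Step V)} :
    wSum w (a :: l) = w a.1 a.2.1 a.2.2 + wSum w l := rfl

@[simp] lemma wSum_append {l₁ l₂ : List (Step V)} :
    wSum w (l₁ ++ l₂) = wSum w l₁ + wSum w l₂ := by
  simp [wSum]

lemma isWalk_append_of {s m t : V} {l₁ l₂ : List (Step V)} (h₁ : IsWalk AS s m l₁)
    (h₂ : IsWalk AS m t l₂) : IsWalk AS s t (l₁ ++ l₂) := by
  induction l₁ generalizing s with
  | nil => cases h₁; exact h₂
  | cons a l ih =>
      obtain ⟨x, y, b⟩ := a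
      obtain ⟨rfl, harc, hw⟩ := h₁
      exact ⟨rfl, harc, ih hw⟩

lemma isWalk_append_split {s t : V} {l₁ l₂ : List (Step V)}
    (h : IsWalk AS s t (l₁ ++ l₂)) : ∃ m, IsWalk AS s m l₁ ∧ IsWalk AS m t l₂ := by
  induction l₁ generalizing s with
  | nil => exact ⟨s, rfl, h⟩
  | cons a l ih =>
      obtain ⟨x, y, b⟩ := a
      obtain ⟨rfl, harc, hw⟩ := h
      obtain ⟨m, h1, h2⟩ := ih hw
      exact ⟨m, ⟨rfl, harc, h1⟩, h2⟩

lemma isWalk_mono (hAS : ∀ u v b, AS u v b → AS' u v b) {s t : V} {l : List (Step V)}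
    (h : IsWalk AS s t l) : IsWalk AS' s t l := by
  induction l generalizing s with
  | nil => exact h
  | cons a l ih =>
      obtain ⟨x, y, b⟩ := a
      obtain ⟨rfl, harc, hw⟩ := h
      exact ⟨rfl, hAS _ _ _ harc, ih hw⟩

lemma isWalk_arcs {s t : V} {l : List (Step V)} (h : IsWalk AS s t l) :
    ∀ a ∈ l, AS a.1 a.2.1 a.2.2 := by
  induction l generalizing s with
  | nil => intro a ha; cases ha
  | cons a l ih =>
      obtain ⟨x, y, b⟩ := a
      obtain ⟨rfl, harc, hw⟩ := h
      intro a ha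
      rcases List.mem_cons.1 ha with rfl | ha
      · exact harc
      · exact ih hw a ha

lemma isWalk_end_mem {s t : V} {l : List (Step V)} (h : IsWalk AS s t l) :
    t = s ∨ t ∈ heads l := by
  induction l generalizing s with
  | nil => exact Or.inl h.symm
  | cons a l ih =>
      obtain ⟨x, y, b⟩ := a
      obtain ⟨rfl, harc, hw⟩ := h
      rcases ih hw with rfl | hm
      · exact Or.inr (by simp)
      · exact Or.inr (by simp [hm])

/-- Split a list at the first element satisfying `p`. -/
lemma exists_first_split {α : Type*} (p : α → Prop) {l : List α} (h : ∃ a ∈ l, p a) :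
    ∃ l₁ a l₂, l = l₁ ++ a :: l₂ ∧ p a ∧ ∀ b ∈ l₁, ¬ p b := by
  classical
  induction l with
  | nil => simp at h
  | cons c l ih =>
      by_cases hc : p c
      · exact ⟨[], c, l, by simp, hc, by simp⟩
      · obtain ⟨a, ha, hpa⟩ := h
        rcases List.mem_cons.1 ha with rfl | ha
        · exact absurd hpa hc
        · obtain ⟨l₁, a, l₂, rfl, hpa', hl₁⟩ := ih ⟨a, ha, hpa⟩
          exact ⟨c :: l₁, a, l₂, by simp, hpa', by
            intro b hb
            rcases List.mem_cons.1 hb with rfl | hb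
            · exact hc
            · exact hl₁ b hb⟩

/-- Split a list at the last element satisfying `p`. -/
lemma exists_last_split {α : Type*} (p : α → Prop) {l : List α} (h : ∃ a ∈ l, p a) :
    ∃ l₁ a l₂, l = l₁ ++ a :: l₂ ∧ p a ∧ ∀ b ∈ l₂, ¬ p b := by
  classical
  induction l with
  | nil => simp at h
  | cons c l ih =>
      by_cases hl : ∃ a ∈ l, p a
      · obtain ⟨l₁, a, l₂, rfl, hpa, hl₂⟩ := ih hl
        exact ⟨c :: l₁, a, l₂, by simp, hpa, hl₂⟩
      · obtain ⟨a, ha, hpa⟩ := h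
        rcases List.mem_cons.1 ha with rfl | ha
        · exact ⟨[], a, l, by simp, hpa, fun b hb hpb => hl ⟨b, hb, hpb⟩⟩
        · exact absurd ⟨a, ha, hpa⟩ hl

lemma not_nodup_split {α : Type*} [DecidableEq α] {L : List α} (h : ¬ L.Nodup) :
    ∃ (a : α) (L₁ L₂ L₃ : List α), L = L₁ ++ a :: L₂ ++ a :: L₃ := by
  induction L with
  | nil => simp at h
  | cons c L ih =>
      by_cases hc : c ∈ L
      · obtain ⟨L₂, L₃, rfl⟩ := List.append_of_mem hc
        exact ⟨c, [], L₂, L₃, by simp⟩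
      · have : ¬ L.Nodup := fun hn => h (List.nodup_cons.2 ⟨hc, hn⟩)
        obtain ⟨a, L₁, L₂, L₃, rfl⟩ := ih this
        exact ⟨a, c :: L₁, L₂, L₃, by simp⟩

lemma heads_split {x : V} {l : List (Step V)} {H₁ H₂ : List V}
    (h : heads l = H₁ ++ x :: H₂) :
    ∃ l₁ e l₂, l = l₁ ++ e :: l₂ ∧ heads l₁ = H₁ ∧ (e : Step V).2.1 = x ∧ heads l₂ = H₂ := by
  induction l generalizing H₁ with
  | nil => simp [heads] at h
  | cons a l ih =>
      cases H₁ with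
      | nil =>
          simp only [heads_cons, List.nil_append] at h
          exact ⟨[], a, l, by simp, rfl, (List.cons.injEq .. ▸ h).1, (List.cons.injEq .. ▸ h).2⟩
      | cons y H₁ =>
          simp only [heads_cons, List.cons_append, List.cons.injEq] at h
          obtain ⟨l₁, e, l₂, rfl, h1, h2, h3⟩ := ih h.2
          exact ⟨a :: l₁, e, l₂, by simp, by simp [h1, h.1], h2, h3⟩

end Aux

section Aux2
set_option linter.unusedSectionVars false

variable {V : Type} [Fintype V] [DecidableEq V]
variable {AS : V → V → Bool → Prop} {w : V → V → Bool → ℝ}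

/-- Extract a nonempty closed subwalk from a walk with a duplicated head. -/
lemma exists_closed_extract {s t : V} {l : List (Step V)} (h : IsWalk AS s t l)
    (hdup : ¬ (heads l).Nodup) :
    ∃ (x : V) (C R : List (Step V)), IsWalk AS x x C ∧ C ≠ [] ∧ IsWalk AS s t R ∧ R ≠ [] ∧
      R.length < l.length ∧ C.length < l.length ∧
      wSum w l = wSum w C + wSum w R ∧ (∀ a ∈ C, a ∈ l) ∧ (∀ a ∈ R, a ∈ l) := by
  obtain ⟨x, H₁, H₂, H₃, hH⟩ := not_nodup_split hdup
  have hH' : heads l = H₁ ++ x :: (H₂ ++ x :: H₃) := by simpa using hH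
  obtain ⟨l₁, e₁, l₂', rfl, hh₁, he₁, hh₂'⟩ := heads_split hH'
  obtain ⟨l₂, e₂, l₃, rfl, hh₂, he₂, hh₃⟩ := heads_split hh₂'
  obtain ⟨m₁, hw₁, hw₂⟩ := isWalk_append_split h
  obtain ⟨x₁, y₁, b₁⟩ := e₁
  obtain ⟨rfl, harc₁, hw₃⟩ := hw₂
  simp only at he₁
  subst he₁
  obtain ⟨m₂, hw₄, hw₅⟩ := isWalk_append_split hw₃
  obtain ⟨x₂, y₂, b₂⟩ := e₂
  obtain ⟨rfl, harc₂, hw₆⟩ := hw₅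
  simp only at he₂
  subst he₂
  refine ⟨y₂, l₂ ++ [(x₂, y₂, b₂)], l₁ ++ (x₁, y₂, b₁) :: l₃, ?_, by simp, ?_, by simp, ?_, ?_, ?_, ?_, ?_⟩
  · exact isWalk_append_of hw₄ ⟨rfl, harc₂, rfl⟩
  · exact isWalk_append_of hw₁ ⟨rfl, harc₁, hw₆⟩
  · simp
  · simp; omega
  · simp; ring
  · intro a ha; simp at ha ⊢; tauto
  · intro a ha; simp at ha ⊢; tauto

/-- A negative closed walk contains a negative cycle (on the same steps). -/
lemma exists_neg_cycle_aux : ∀ (n : ℕ) {s : V} {l : List (Step V)}, l.length ≤ n →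
    IsWalk AS s s l → l ≠ [] → wSum w l < 0 →
    ∃ x C, IsCycle AS x C ∧ wSum w C < 0 ∧ ∀ a ∈ C, a ∈ l := by
  intro n
  induction n with
  | zero =>
      intro s l hn h hne hneg
      exact absurd (List.length_eq_zero_iff.1 (Nat.le_zero.1 hn)) hne
  | succ n ih =>
      intro s l hn h hne hneg
      by_cases hnd : (heads l).Nodup
      · exact ⟨s, l, ⟨h, hne, hnd⟩, hneg, fun a ha => ha⟩
      · obtain ⟨x, C, R, hC, hCne, hR, hRne, hRlen, hClen, hsum, hCmem, hRmem⟩ :=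
          exists_closed_extract (w := w) h hnd
        rcases lt_or_ge (wSum w C) 0 with hc | hc
        · obtain ⟨y, C', hcy, hneg', hmem⟩ := ih (by omega) hC hCne hc
          exact ⟨y, C', hcy, hneg', fun a ha => hCmem a (hmem a ha)⟩
        · have hr : wSum w R < 0 := by linarith
          obtain ⟨y, C', hcy, hneg', hmem⟩ := ih (by omega) hR hRne hr
          exact ⟨y, C', hcy, hneg', fun a ha => hRmem a (hmem a ha)⟩

lemma exists_neg_cycle {s : V} {l : List (Step V)} (h : IsWalk AS s s l) (hne : l ≠ [])
    (hneg : wSum w l < 0) :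
    ∃ x C, IsCycle AS x C ∧ wSum w C < 0 ∧ ∀ a ∈ C, a ∈ l :=
  exists_neg_cycle_aux l.length le_rfl h hne hneg

/-- A negative 2-cycle of the improved digraph is a pair of opposite special arcs. -/
lemma neg_two_cycle (D : WDigraph V) {x : V} {C : List (Step V)}
    (hcy : IsCycle D.ImpArc x C) (hlen : C.length = 2) (hneg : wSum D.impW C < 0) :
    ∃ u v, D.Special u v ∧ (u, v, false) ∈ C ∧ (v, u, false) ∈ C := by
  obtain ⟨a, b, rfl⟩ := List.length_eq_two.1 hlen
  obtain ⟨x₁, y₁, b₁⟩ := a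
  obtain ⟨x₂, y₂, b₂⟩ := b
  obtain ⟨h1, harc₁, h3, harc₂, h5⟩ := hcy.1
  subst h1; subst h3; subst h5
  cases b₁ <;> cases b₂
  case false.false =>
    simp only [WDigraph.ImpArc, Bool.false_eq_true, if_false] at harc₁ harc₂
    exact ⟨y₂, x₂, ⟨harc₁, harc₂, by simpa [wSum, WDigraph.impW] using hneg⟩, by simp, by simp⟩
  case false.true =>
    simp [wSum, WDigraph.impW] at hneg
  case true.false =>
    simp [wSum, WDigraph.impW] at hneg
  case true.true =>
    simp only [WDigraph.ImpArc, if_true] at harc₁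
    simp [wSum, WDigraph.impW] at hneg
    linarith [harc₁.2.2]


/-- A closed walk of the improved digraph that does not contain a pair of opposite
special arcs has nonnegative weight. -/
lemma closed_nonneg (D : WDigraph V) (hnc : NearlyCons D.ImpArc D.impW) {m : V}
    {l : List (Step V)} (h : IsWalk D.ImpArc m m l)
    (hss : ∀ u v, D.Special u v → ¬ ((u, v, false) ∈ l ∧ (v, u, false) ∈ l)) :
    0 ≤ wSum D.impW l := by
  by_contra hneg
  push_neg at hneg
  have hne : l ≠ [] := by rintro rfl; simp at hneg
  obtain ⟨x, C, hcy, hneg', hmem⟩ := exists_neg_cycle h hne hneg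
  have hlen := hnc x C hcy hneg'
  obtain ⟨u, v, hsp, h1, h2⟩ := neg_two_cycle D hcy hlen hneg'
  exact hss u v hsp ⟨hmem _ h1, hmem _ h2⟩

/-- A simple path cannot use both an arc and its reverse. -/
lemma path_no_both {s t x y : V} {b₁ b₂ : Bool} {l : List (Step V)}
    (h : IsWalk AS s t l) (hnd : (s :: heads l).Nodup) (hxy : x ≠ y)
    (h₁ : (x, y, b₁) ∈ l) (h₂ : (y, x, b₂) ∈ l) : False := by
  obtain ⟨A, B, rfl⟩ := List.append_of_mem h₁
  obtain ⟨m, hwA, hwB⟩ := isWalk_append_split h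
  obtain ⟨rfl, harc, hwB'⟩ := hwB
  rcases List.mem_append.1 h₂ with h₂ | h₂
  · -- (y, x, b₂) ∈ A
    obtain ⟨A₁, A₂, rfl⟩ := List.append_of_mem h₂
    obtain ⟨m', hwA₁, hwA₂⟩ := isWalk_append_split hwA
    obtain ⟨rfl, harc', hwA₂'⟩ := hwA₂
    have hy : y = s ∨ y ∈ heads A₁ := isWalk_end_mem hwA₁
    have hsplit : s :: heads ((A₁ ++ (y, x, b₂) :: A₂) ++ (x, y, b₁) :: B)
        = (s :: (heads A₁ ++ x :: heads A₂)) ++ (y :: heads B) := by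
      simp
    rw [hsplit] at hnd
    have hdisj := List.disjoint_of_nodup_append hnd
    have hyL : y ∈ s :: (heads A₁ ++ x :: heads A₂) := by
      rcases hy with rfl | hy
      · simp
      · simp [hy]
    exact hdisj hyL (by simp)
  · rcases List.mem_cons.1 h₂ with heq | h₂
    · injection heq with hh1 hh2
      exact hxy hh1.symm
    · -- (y, x, b₂) ∈ B
      have hx : x = s ∨ x ∈ heads A := isWalk_end_mem hwA
      have hxB : x ∈ heads B := List.mem_map.2 ⟨_, h₂, rfl⟩
      have hsplit : s :: heads (A ++ (x, y, b₁) :: B)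
          = (s :: heads A) ++ (y :: heads B) := by simp
      rw [hsplit] at hnd
      have hdisj := List.disjoint_of_nodup_append hnd
      have hxL : x ∈ s :: heads A := by
        rcases hx with rfl | hx
        · simp
        · simp [hx]
      exact hdisj hxL (by simp [hxB])

end Aux2

section Aux3
set_option linter.unusedSectionVars false

variable {V : Type} [Fintype V] [DecidableEq V]
variable {AS AS' : V → V → Bool → Prop} {w : V → V → Bool → ℝ}

lemma isWalk_strengthen {s t : V} {l : List (Step V)} (h : IsWalk AS s t l)
    (h' : ∀ a ∈ l, AS' a.1 a.2.1 a.2.2) : IsWalk AS' s t l := by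
  induction l generalizing s with
  | nil => exact h
  | cons a l ih =>
      obtain ⟨x, y, b⟩ := a
      obtain ⟨rfl, harc, hw⟩ := h
      exact ⟨rfl, h' (x, y, b) (List.mem_cons_self), ih hw fun a ha => h' a (List.mem_cons_of_mem _ ha)⟩

/-- Any special-simple walk of the improved digraph can be turned into a path
with no larger weight. -/
lemma walk_to_path_aux (D : WDigraph V) (hnc : NearlyCons D.ImpArc D.impW) :
    ∀ (n : ℕ) {s t : V} {l : List (Step V)}, l.length ≤ n →
    IsWalk D.ImpArc s t l →
    (∀ u v, D.Special u v → ¬ ((u, v, false) ∈ l ∧ (v, u, false) ∈ l)) →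
    ∃ l', IsPath D.ImpArc s t l' ∧ wSum D.impW l' ≤ wSum D.impW l := by
  intro n
  induction n with
  | zero =>
      intro s t l hn h hss
      have hl : l = [] := List.length_eq_zero_iff.1 (Nat.le_zero.1 hn)
      subst hl
      exact ⟨[], ⟨h, by simp⟩, le_rfl⟩
  | succ n ih =>
      intro s t l hn h hss
      by_cases hnd : (s :: heads l).Nodup
      · exact ⟨l, ⟨h, hnd⟩, le_rfl⟩
      rcases not_and_or.1 ((List.nodup_cons).not.1 hnd) with hs | hd
      · -- s occurs among the heads
        have hs' : s ∈ heads l := not_not.1 hs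
        obtain ⟨e, he, hes⟩ := List.mem_map.1 hs'
        obtain ⟨A, B, rfl⟩ := List.append_of_mem he
        obtain ⟨x₁, y₁, b₁⟩ := e
        simp only at hes
        subst hes
        obtain ⟨m, hwA, hwe⟩ := isWalk_append_split h
        obtain ⟨rfl, harc, hwB⟩ := hwe
        have hclosed : IsWalk D.ImpArc y₁ y₁ (A ++ [(x₁, y₁, b₁)]) :=
          isWalk_append_of hwA ⟨rfl, harc, rfl⟩
        have hmemA : ∀ a : Step V, a ∈ A ++ [(x₁, y₁, b₁)] → a ∈ A ++ (x₁, y₁, b₁) :: B := by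
          intro a ha
          rcases List.mem_append.1 ha with hh | hh
          · exact List.mem_append_left _ hh
          · simp only [List.mem_singleton] at hh
            exact List.mem_append_right _ (hh ▸ List.mem_cons_self)
        have hmemB : ∀ a : Step V, a ∈ B → a ∈ A ++ (x₁, y₁, b₁) :: B := by
          intro a ha
          exact List.mem_append_right _ (List.mem_cons_of_mem _ ha)
        have h0 : 0 ≤ wSum D.impW (A ++ [(x₁, y₁, b₁)]) := by
          refine closed_nonneg D hnc hclosed ?_
          intro u v hsp ⟨h1, h2⟩
          exact hss u v hsp ⟨hmemA _ h1, hmemA _ h2⟩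
        obtain ⟨l', hp', hle⟩ := ih (by simp at hn ⊢; omega) hwB
          (fun u v hsp ⟨h1, h2⟩ => hss u v hsp ⟨hmemB _ h1, hmemB _ h2⟩)
        refine ⟨l', hp', ?_⟩
        have heq : wSum D.impW (A ++ (x₁, y₁, b₁) :: B)
            = wSum D.impW (A ++ [(x₁, y₁, b₁)]) + wSum D.impW B := by simp; ring
        rw [heq]
        linarith
      · -- a duplicated head
        obtain ⟨x, C, R, hC, hCne, hR, hRne, hRlen, hClen, hsum, hCmem, hRmem⟩ :=
          exists_closed_extract (w := D.impW) h hd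
        have h0 : 0 ≤ wSum D.impW C := by
          refine closed_nonneg D hnc hC ?_
          intro u v hsp ⟨h1, h2⟩
          exact hss u v hsp ⟨hCmem _ h1, hCmem _ h2⟩
        obtain ⟨l', hp', hle⟩ := ih (by omega) hR
          (fun u v hsp ⟨h1, h2⟩ => hss u v hsp ⟨hRmem _ h1, hRmem _ h2⟩)
        exact ⟨l', hp', by linarith⟩

lemma walk_to_path (D : WDigraph V) (hnc : NearlyCons D.ImpArc D.impW) {s t : V}
    {l : List (Step V)} (h : IsWalk D.ImpArc s t l)
    (hss : ∀ u v, D.Special u v → ¬ ((u, v, false) ∈ l ∧ (v, u, false) ∈ l)) :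
    ∃ l', IsPath D.ImpArc s t l' ∧ wSum D.impW l' ≤ wSum D.impW l :=
  walk_to_path_aux D hnc l.length le_rfl h hss

/-- The steps of the improved digraph corresponding to a walk of `F`. -/
def tsteps (D : WDigraph V) {a b : V} (q : D.F.Walk a b) : List (Step V) :=
  q.darts.map fun d => (d.toProd.1, d.toProd.2, false)

/-- The reversed list of loose steps corresponding to a walk of `F`. -/
def rloose (D : WDigraph V) {a b : V} (q : D.F.Walk a b) : List (Step V) :=
  (q.darts.map fun d => (d.toProd.2, d.toProd.1, true)).reverse

lemma tsteps_isWalk (D : WDigraph V) {a b : V} (q : D.F.Walk a b) :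
    IsWalk D.ImpArc a b (tsteps D q) := by
  induction q with
  | nil => rfl
  | cons h q ih =>
      refine ⟨rfl, ?_, ih⟩
      simpa [WDigraph.ImpArc] using h.2.1

lemma tsteps_wSum (D : WDigraph V) {a b : V} (q : D.F.Walk a b) :
    wSum D.impW (tsteps D q) = D.fWeight q := by
  induction q with
  | nil => rfl
  | cons h q ih =>
      simp only [tsteps, SimpleGraph.Walk.darts_cons, List.map_cons, wSum_cons,
        WDigraph.fWeight, List.sum_cons, WDigraph.impW, Bool.false_eq_true, if_false] at ih ⊢
      rw [ih]

lemma rloose_isWalk (D : WDigraph V) {a b : V} (q : D.F.Walk a b) :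
    IsWalk D.ImpArc b a (rloose D q) := by
  induction q with
  | nil => rfl
  | @cons a c b h q ih =>
      have : rloose D (SimpleGraph.Walk.cons h q) = rloose D q ++ [(c, a, true)] := by
        simp [rloose]
      rw [this]
      refine isWalk_append_of ih ⟨rfl, ?_, rfl⟩
      simpa [WDigraph.ImpArc] using h.2

lemma rloose_wSum (D : WDigraph V) {a b : V} (q : D.F.Walk a b) :
    wSum D.impW (rloose D q) = -(D.fWeight q) := by
  induction q with
  | nil => simp [rloose, WDigraph.fWeight]
  | @cons a c b h q ih =>
      have : rloose D (SimpleGraph.Walk.cons h q) = rloose D q ++ [(c, a, true)] := by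
        simp [rloose]
      rw [this]
      simp [WDigraph.fWeight, WDigraph.impW, ih]
      try ring

lemma rloose_true (D : WDigraph V) {a b : V} (q : D.F.Walk a b) :
    ∀ e ∈ rloose D q, (e : Step V).2.2 = true := by
  intro e he
  simp [rloose] at he
  obtain ⟨d, -, h⟩ := he
  rw [← h]

/-- Core lemma: the weight of a tree walk from `u` to `v` is a lower bound for the
weight of any simple path from `u` to `v` in the improved digraph. -/
lemma fWeight_le_path (D : WDigraph V) (hloop : ∀ v, ¬ D.Adj v v)
    (hnc : NearlyCons D.ImpArc D.impW) {u v : V} (p : D.F.Walk u v)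
    {M : List (Step V)} (hM : IsWalk D.ImpArc u v M) (hnd : (u :: heads M).Nodup) :
    D.fWeight p ≤ wSum D.impW M := by
  have hW : IsWalk D.ImpArc u u (M ++ rloose D p) :=
    isWalk_append_of hM (rloose_isWalk D p)
  have h0 : 0 ≤ wSum D.impW (M ++ rloose D p) := by
    refine closed_nonneg D hnc hW ?_
    intro x y hsp ⟨h1, h2⟩
    have hxy : x ≠ y := fun h => hloop x (h ▸ hsp.1)
    have hm1 : (x, y, false) ∈ M := by
      rcases List.mem_append.1 h1 with h | h
      · exact h
      · simpa using rloose_true D p _ h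
    have hm2 : (y, x, false) ∈ M := by
      rcases List.mem_append.1 h2 with h | h
      · exact h
      · simpa using rloose_true D p _ h
    exact path_no_both hM hnd hxy hm1 hm2
  have := rloose_wSum D p
  simp only [wSum_append] at h0
  linarith

lemma distW_le {s t : V} {l : List (Step V)} (h : IsPath AS s t l) :
    distW AS w s t ≤ (wSum w l : EReal) :=
  sInf_le ⟨l, h, rfl⟩

lemma distW_set_finite (AS : V → V → Bool → Prop) (w : V → V → Bool → ℝ) (s t : V) :
    {x : EReal | ∃ l, IsPath AS s t l ∧ (wSum w l : EReal) = x}.Finite := by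
  have : {x : EReal | ∃ l, IsPath AS s t l ∧ (wSum w l : EReal) = x}
      = (fun l => ((wSum w l : ℝ) : EReal)) '' {l | IsPath AS s t l} := by
    ext x; simp [eq_comm]
  rw [this]
  refine Set.Finite.image _ (Set.Finite.subset (List.finite_length_le (Step V) (Fintype.card V)) ?_)
  intro l hl
  have h1 : (heads l).Nodup := (List.nodup_cons.1 hl.2).2
  have h2 := h1.length_le_card
  simpa [heads] using h2

lemma distW_ne_bot (AS : V → V → Bool → Prop) (w : V → V → Bool → ℝ) (s t : V) :
    distW AS w s t ≠ ⊥ := by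
  rcases Set.eq_empty_or_nonempty {x : EReal | ∃ l, IsPath AS s t l ∧ (wSum w l : EReal) = x}
    with he | hne
  · simp [distW, he]
  · have := hne.csInf_mem (distW_set_finite AS w s t)
    obtain ⟨l, -, hl⟩ := this
    rw [distW, ← hl]
    exact EReal.coe_ne_bot _

lemma distW_attained (AS : V → V → Bool → Prop) (w : V → V → Bool → ℝ) (s t : V)
    (h : distW AS w s t ≠ ⊤) :
    ∃ l, IsPath AS s t l ∧ (wSum w l : EReal) = distW AS w s t := by
  rcases Set.eq_empty_or_nonempty {x : EReal | ∃ l, IsPath AS s t l ∧ (wSum w l : EReal) = x}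
    with he | hne
  · exact absurd (by simp [distW, he]) h
  · exact hne.csInf_mem (distW_set_finite AS w s t)

end Aux3

section Aux4
set_option linter.unusedSectionVars false

variable {V : Type} [Fintype V] [DecidableEq V]

lemma nodup_head_left {α : Type*} {s : α} {X Y Z : List α}
    (h : (s :: (X ++ Y ++ Z)).Nodup) : (s :: X).Nodup := by
  obtain ⟨hs, hrest⟩ := List.nodup_cons.1 h
  refine List.nodup_cons.2 ⟨fun hx => hs (by simp [hx]), ?_⟩
  exact (List.nodup_append.1 (List.nodup_append.1 hrest).1).1

lemma nodup_mid {α : Type*} {s a : α} {X Y Z : List α}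
    (h : (s :: (X ++ Y ++ Z)).Nodup) (ha : a = s ∨ a ∈ X) : (a :: Y).Nodup := by
  obtain ⟨hs, hrest⟩ := List.nodup_cons.1 h
  have hY : Y.Nodup := (List.nodup_append.1 (List.nodup_append.1 hrest).1).2.1
  refine List.nodup_cons.2 ⟨?_, hY⟩
  rcases ha with rfl | ha
  · exact fun hx => hs (by simp [hx])
  · rw [List.append_assoc] at hrest
    have hd := List.disjoint_of_nodup_append hrest
    exact fun hx => hd ha (by simp [hx])

lemma nodup_right {α : Type*} {s a : α} {X Y' Z : List α}
    (h : (s :: (X ++ (Y' ++ [a]) ++ Z)).Nodup) : (a :: Z).Nodup := by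
  obtain ⟨hs, hrest⟩ := List.nodup_cons.1 h
  have hZ : Z.Nodup := (List.nodup_append.1 hrest).2.1
  have hd := List.disjoint_of_nodup_append hrest
  exact List.nodup_cons.2 ⟨fun hx => hd (by simp) hx, hZ⟩

end Aux4


/-- Suppose the forest `F` has exactly one nontrivial component, the negative
tree `T` containing `t₀`, and `c` is nearly conservative on the improved digraph `D`.
With `d'` the distance function of `D' = D − A(T)` and `dT = d^T`, for all `s ≠ t`,
`d(s,t) = min( d'(s,t), min_{u,v ∈ V(T)} [ d'(s,u) + d^T(u,v) + d'(v,t) ] )`. -/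
theorem statement_8 {V : Type} [Fintype V] [DecidableEq V] (D : WDigraph V)
    (hloop : ∀ v, ¬ D.Adj v v) (hforest : D.F.IsAcyclic)
    (t₀ : V) (hT : ∃ y, D.F.Adj t₀ y)
    (honly : ∀ x y, D.F.Adj x y → D.F.Reachable t₀ x)
    (hnc : NearlyCons D.ImpArc D.impW)
    (dT : V → V → ℝ)
    (hdT : ∀ u v, D.F.Reachable t₀ u → D.F.Reachable t₀ v →
      ∃ p : D.F.Walk u v, p.IsPath ∧ D.fWeight p = dT u v)
    (s t : V) (hst : s ≠ t) :
    distW D.ImpArc D.impW s t =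
      min (distW (D.arcsMinus (remT D t₀)) D.impW s t)
        (sInf {x : EReal | ∃ u v, D.F.Reachable t₀ u ∧ D.F.Reachable t₀ v ∧
          x = distW (D.arcsMinus (remT D t₀)) D.impW s u + (dT u v : EReal)
              + distW (D.arcsMinus (remT D t₀)) D.impW v t}) := by
  classical
  set AS' := D.arcsMinus (remT D t₀) with hAS'
  have hmono : ∀ u v b, AS' u v b → D.ImpArc u v b := fun _ _ _ h => h.1
  have hspec_not : ∀ x y, D.Special x y → ¬ AS' x y false := by
    intro x y hsp h
    have hne : x ≠ y := fun he => hloop x (he ▸ hsp.1)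
    have hFadj : D.F.Adj x y := ⟨hne, hsp⟩
    exact h.2 ⟨rfl, hFadj, honly x y hFadj⟩
  refine le_antisymm (le_min ?_ ?_) ?_
  · -- d(s,t) ≤ d'(s,t)
    refine sInf_le_sInf ?_
    rintro x ⟨l, ⟨hw, hnd⟩, rfl⟩
    exact ⟨l, ⟨isWalk_mono hmono hw, hnd⟩, rfl⟩
  · -- d(s,t) ≤ inf over u, v
    refine le_sInf ?_
    rintro x ⟨u, v, hu, hv, rfl⟩
    by_cases h1 : distW AS' D.impW s u = ⊤
    · rw [h1, EReal.top_add_coe, EReal.top_add_of_ne_bot (distW_ne_bot _ _ _ _)]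
      exact le_top
    by_cases h2 : distW AS' D.impW v t = ⊤
    · have hne : distW AS' D.impW s u + (dT u v : EReal) ≠ ⊥ := by
        intro hbot
        rcases EReal.add_eq_bot_iff.1 hbot with hb | hb
        · exact distW_ne_bot _ _ _ _ hb
        · exact EReal.coe_ne_bot _ hb
      rw [h2, EReal.add_top_of_ne_bot hne]
      exact le_top
    obtain ⟨l₁, hp₁, he₁⟩ := distW_attained AS' D.impW s u h1
    obtain ⟨l₂, hp₂, he₂⟩ := distW_attained AS' D.impW v t h2
    obtain ⟨p, hp, hpw⟩ := hdT u v hu hv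
    have hwalk : IsWalk D.ImpArc s t (l₁ ++ (tsteps D p ++ l₂)) :=
      isWalk_append_of (isWalk_mono hmono hp₁.1)
        (isWalk_append_of (tsteps_isWalk D p) (isWalk_mono hmono hp₂.1))
    have hss : ∀ x y, D.Special x y →
        ¬ ((x, y, false) ∈ l₁ ++ (tsteps D p ++ l₂) ∧
           (y, x, false) ∈ l₁ ++ (tsteps D p ++ l₂)) := by
      intro x y hsp ⟨hm1, hm2⟩
      have hmem : ∀ z w : V, D.Special z w → (z, w, false) ∈ l₁ ++ (tsteps D p ++ l₂) →
          ∃ d ∈ p.darts, SimpleGraph.Dart.toProd d = (z, w) := by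
        intro z w hzw hm
        rcases List.mem_append.1 hm with h | h
        · exact absurd (isWalk_arcs hp₁.1 _ h) (hspec_not z w hzw)
        rcases List.mem_append.1 h with h | h
        · simp only [tsteps, List.mem_map] at h
          obtain ⟨d, hd, hde⟩ := h
          refine ⟨d, hd, ?_⟩
          have h1' : d.toProd.1 = z := congrArg Prod.fst hde
          have h2' : d.toProd.2 = w := congrArg Prod.fst (congrArg Prod.snd hde)
          exact Prod.ext h1' h2'
        · exact absurd (isWalk_arcs hp₂.1 _ h) (hspec_not z w hzw)
      obtain ⟨d₁, hd₁, hde₁⟩ := hmem x y hsp hm1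
      obtain ⟨d₂, hd₂, hde₂⟩ := hmem y x ⟨hsp.2.1, hsp.1, by linarith [hsp.2.2]⟩ hm2
      have hxy : x ≠ y := fun he => hloop x (he ▸ hsp.1)
      have hedges : (p.darts.map SimpleGraph.Dart.edge).Nodup := hp.edges_nodup
      have heq : d₁.edge = d₂.edge := by
        rw [SimpleGraph.Dart.edge, SimpleGraph.Dart.edge, hde₁, hde₂]
        exact Sym2.eq_swap
      have : d₁ = d₂ := List.inj_on_of_nodup_map hedges hd₁ hd₂ heq
      rw [this, hde₂] at hde₁
      exact hxy (congrArg Prod.fst hde₁).symm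
    obtain ⟨l', hp', hle⟩ := walk_to_path D hnc hwalk hss
    have hsum : wSum D.impW (l₁ ++ (tsteps D p ++ l₂))
        = wSum D.impW l₁ + dT u v + wSum D.impW l₂ := by
      simp [tsteps_wSum, hpw]
      ring
    calc distW D.ImpArc D.impW s t ≤ (wSum D.impW l' : EReal) := distW_le hp'
      _ ≤ ((wSum D.impW (l₁ ++ (tsteps D p ++ l₂)) : ℝ) : EReal) :=
          EReal.coe_le_coe_iff.2 hle
      _ = distW AS' D.impW s u + (dT u v : EReal) + distW AS' D.impW v t := by
          rw [hsum, EReal.coe_add, EReal.coe_add, he₁, he₂]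
  · -- min ≤ d(s,t)
    refine le_sInf ?_
    rintro x ⟨l, ⟨hwl, hndl⟩, rfl⟩
    by_cases htree : ∃ a ∈ l, (a : Step V).2.2 = false ∧ remT D t₀ a.1 a.2.1
    · -- l uses a tree arc
      obtain ⟨A, e, B, rfl, hetree, hAfree⟩ := exists_first_split _ htree
      obtain ⟨C, f, E2, hCB, hftree, hEfree⟩ :=
        exists_last_split (fun a : Step V => a.2.2 = false ∧ remT D t₀ a.1 a.2.1)
          ⟨e, List.mem_cons_self, hetree⟩
      obtain ⟨e1, e2, eb⟩ := e
      obtain ⟨f1, f2, fb⟩ := f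
      have hl : A ++ (e1, e2, eb) :: B = (A ++ (C ++ [(f1, f2, fb)])) ++ E2 := by
        rw [hCB]; simp
      rw [hl] at hwl hndl ⊢
      obtain ⟨m₂, hwAM, hwE⟩ := isWalk_append_split hwl
      obtain ⟨m₁, hwA, hwM⟩ := isWalk_append_split hwAM
      have hMcons : ∃ M', C ++ [(f1, f2, fb)] = (e1, e2, eb) :: M' := by
        cases C with
        | nil =>
            injection hCB with h1 h2
            exact ⟨[], by simp [h1]⟩
        | cons c C' =>
            injection hCB with h1 h2
            exact ⟨C' ++ [(f1, f2, fb)], by rw [h1]; rfl⟩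
      obtain ⟨M', hM'⟩ := hMcons
      have he1 : e1 = m₁ := by rw [hM'] at hwM; exact hwM.1
      subst he1
      obtain ⟨m', hwC, hwf⟩ := isWalk_append_split hwM
      obtain ⟨hf1, harcf, hf2⟩ := hwf
      have hf2' : f2 = m₂ := hf2
      subst hf2'
      have hu : D.F.Reachable t₀ e1 := hetree.2.2
      have hv : D.F.Reachable t₀ f2 := hftree.2.2.trans hftree.2.1.reachable
      have hA' : IsWalk AS' s e1 A := isWalk_strengthen hwA
        (fun a ha => ⟨isWalk_arcs hwA a ha, fun hcon => hAfree a ha ⟨hcon.1, hcon.2⟩⟩)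
      have hE' : IsWalk AS' f2 t E2 := isWalk_strengthen hwE
        (fun a ha => ⟨isWalk_arcs hwE a ha, fun hcon => hEfree a ha ⟨hcon.1, hcon.2⟩⟩)
      have hnds : (s :: (heads A ++ heads (C ++ [(f1, f2, fb)]) ++ heads E2)).Nodup := by
        simpa using hndl
      have ndA : (s :: heads A).Nodup := nodup_head_left hnds
      have ndM : (e1 :: heads (C ++ [(f1, f2, fb)])).Nodup :=
        nodup_mid hnds (isWalk_end_mem hwA)
      have ndE : (f2 :: heads E2).Nodup := by
        have : heads (C ++ [(f1, f2, fb)]) = heads C ++ [f2] := by simp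
        rw [this] at hnds
        exact nodup_right hnds
      obtain ⟨p, hpp, hpw⟩ := hdT e1 f2 hu hv
      have hbM : dT e1 f2 ≤ wSum D.impW (C ++ [(f1, f2, fb)]) :=
        hpw ▸ fWeight_le_path D hloop hnc p hwM ndM
      have hbA : distW AS' D.impW s e1 ≤ (wSum D.impW A : EReal) := distW_le ⟨hA', ndA⟩
      have hbE : distW AS' D.impW f2 t ≤ (wSum D.impW E2 : EReal) := distW_le ⟨hE', ndE⟩
      refine le_trans (min_le_right _ _) (le_trans (sInf_le ⟨e1, f2, hu, hv, rfl⟩) ?_)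
      have hfinal : (wSum D.impW A : EReal) + (dT e1 f2 : EReal) + (wSum D.impW E2 : EReal)
          ≤ ((wSum D.impW ((A ++ (C ++ [(f1, f2, fb)])) ++ E2) : ℝ) : EReal) := by
        rw [← EReal.coe_add, ← EReal.coe_add, EReal.coe_le_coe_iff]
        simp only [wSum_append] at hbM ⊢
        linarith
      exact le_trans (add_le_add (add_le_add hbA le_rfl) hbE) hfinal
    · -- l avoids the tree arcs
      have hpath' : IsPath AS' s t l :=
        ⟨isWalk_strengthen hwl
          (fun a ha => ⟨isWalk_arcs hwl a ha, fun hcon => htree ⟨a, ha, hcon.1, hcon.2⟩⟩),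
         hndl⟩
      exact le_trans (min_le_left _ _) (distW_le hpath')

end NearlyConservativePaper
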